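/- Let t ∈ ℝ be irrational and consider the subgroup Γ_t := {([0], [−t·u], [0], [u], [v]) : u, v ∈ ℝ} of the 5-torus (ℝ/2πℤ)^5, where [·] denotes the class of a real number modulo 2πℤ. Then the closure of Γ_t equals the 3-dimensional subtorus {([0], a, [0], b, c) : a, b, c ∈ ℝ/2πℤ}, and Γ_t is a proper subset of its closure; in particular Γ_t is neither closed nor compact (so for irrational t no leaf of the characteristic foliation is a 2-torus and the deformed coisotropic submanifold is not integral). -/

import Mathlib

/-- The leaf through the origin of the characteristic foliation `F'_t` inside the 5-torus
`(ℝ/2πℤ)^5`: the subgroup `{([0], [−t·u], [0], [u], [v]) : u, v ∈ ℝ}`. -/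
def leafGroup (t : ℝ) : Set (Fin 5 → AddCircle (2 * Real.pi)) :=
  {x | ∃ u v : ℝ,
    x = ![(0 : AddCircle (2 * Real.pi)), ((-t * u : ℝ) : AddCircle (2 * Real.pi)),
          (0 : AddCircle (2 * Real.pi)), ((u : ℝ) : AddCircle (2 * Real.pi)),
          ((v : ℝ) : AddCircle (2 * Real.pi))]}

/-!
The leaf is the image of `L × (ℝ/2πℤ)` under the closed embedding of the 3-torus into the
coordinates `1, 3, 4`, where `L = {([−t u], [u])}` is a line of irrational slope in the 2-torus.
On the fibre `[u] = [u₀]` the first coordinate of `L` runs through `[−t u₀] + ℤ • [−2πt]`,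
which is dense in the circle because `t` is irrational; hence `L` is dense and the closure of
the leaf is the whole subtorus. But `L` misses `([π], 0)`: its points over `[u] = 0` are
multiples of `[−2πt]`, an element of infinite order, while `[π] ≠ 0` has order `2`.
-/

open Set

theorem eq_zero_of_isOfFinAddOrder_of_mem_zmultiples {G : Type*} [AddGroup G] {g y : G}
    (hg : ¬IsOfFinAddOrder g) (hy : IsOfFinAddOrder y) (hmem : y ∈ AddSubgroup.zmultiples g) :
    y = 0 := by
  obtain ⟨k, rfl⟩ := hmem
  have hk : ((addOrderOf (k • g) : ℤ) * k) • g = (0 : ℤ) • g := by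
    rw [mul_zsmul, natCast_zsmul, addOrderOf_nsmul_eq_zero, zero_zsmul]
  have := injective_zsmul_iff_not_isOfFinAddOrder.mpr hg hk
  simp_all [hy.addOrderOf_pos.ne']

namespace AddCircle

variable {p : ℝ}

def linearFlow (p a : ℝ) (u : ℝ) : AddCircle p × AddCircle p := (↑(a * u), ↑u)

theorem linearFlow_add_zsmul_period (a u : ℝ) (k : ℤ) :
    linearFlow p a (u + k • p) = (↑(a * u) + k • (↑(a * p) : AddCircle p), ↑u) := by
  rw [linearFlow, mul_add, mul_smul_comm, coe_add, coe_add, coe_zsmul, coe_zsmul, coe_period,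
    smul_zero, add_zero]

theorem dense_range_linearFlow {a : ℝ} (hp : p ≠ 0) (ha : Irrational a) :
    Dense (range (linearFlow p a)) := by
  rintro ⟨x, y⟩
  obtain ⟨u, rfl⟩ := QuotientAddGroup.mk_surjective y
  have hdense : DenseRange (· • (↑(a * p) : AddCircle p) : ℤ → AddCircle p) :=
    denseRange_zsmul_coe_iff.mpr (by rwa [mul_div_cancel_right₀ a hp])
  have hmem := map_mem_closure (t := range (linearFlow p a))
    (f := fun c : AddCircle p => (↑(a * u) + c, (u : AddCircle p))) (by fun_prop)
    (hdense (x - ↑(a * u)))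
    (by rintro _ ⟨k, rfl⟩; exact ⟨_, linearFlow_add_zsmul_period a u k⟩)
  simpa using hmem

theorem half_period_zero_notMem_range_linearFlow [Fact (0 < p)] {a : ℝ} (ha : Irrational a) :
    ((↑(p / 2), 0) : AddCircle p × AddCircle p) ∉ range (linearFlow p a) := by
  rintro ⟨u, hu⟩
  obtain ⟨k, rfl⟩ := (coe_eq_zero_iff p).mp (congrArg Prod.snd hu)
  have hshift := linearFlow_add_zsmul_period (p := p) a 0 k
  rw [zero_add, hu] at hshift
  have hmem : (↑(p / 2) : AddCircle p) ∈ AddSubgroup.zmultiples (↑(a * p) : AddCircle p) :=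
    ⟨k, by simpa using (congrArg Prod.fst hshift).symm⟩
  have horder : addOrderOf (↑(p / 2) : AddCircle p) = 2 := by
    exact_mod_cast addOrderOf_period_div (p := p) (n := 2) two_pos
  have hinf : ¬IsOfFinAddOrder (↑(a * p) : AddCircle p) :=
    not_isOfFinAddOrder_iff_forall_rat_ne_div.mpr fun q hq =>
      ha ⟨q, by rwa [mul_div_cancel_right₀ a (Fact.out : 0 < p).ne'] at hq⟩
  have := eq_zero_of_isOfFinAddOrder_of_mem_zmultiples hinf
    (addOrderOf_pos_iff.mp (by omega)) hmem
  simp [this] at horder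

end AddCircle

section Subtorus

variable (p : ℝ)

def subtorusEmbedding (x : (AddCircle p × AddCircle p) × AddCircle p) : Fin 5 → AddCircle p :=
  ![0, x.1.1, 0, x.1.2, x.2]

theorem isClosedEmbedding_subtorusEmbedding [Fact (0 < p)] :
    Topology.IsClosedEmbedding (subtorusEmbedding p) := by
  refine Continuous.isClosedEmbedding (by unfold subtorusEmbedding; fun_prop) fun x y h => ?_
  have h1 := congrFun h 1
  have h3 := congrFun h 3
  have h4 := congrFun h 4
  simp only [subtorusEmbedding, Matrix.cons_val] at h1 h3 h4
  ext <;> assumption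

theorem range_subtorusEmbedding :
    range (subtorusEmbedding p) = {x | x 0 = 0 ∧ x 2 = 0} := by
  ext x
  refine ⟨?_, fun ⟨h0, h2⟩ => ⟨((x 1, x 3), x 4), ?_⟩⟩
  · rintro ⟨y, rfl⟩
    simp [subtorusEmbedding]
  · ext i
    fin_cases i <;> simp [subtorusEmbedding, h0, h2]

end Subtorus

theorem leafGroup_eq_image (t : ℝ) :
    leafGroup t = subtorusEmbedding (2 * Real.pi) ''
      (range (AddCircle.linearFlow (2 * Real.pi) (-t)) ×ˢ univ) := by
  ext x
  constructor
  · rintro ⟨u, v, rfl⟩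
    exact ⟨((_, _), _), ⟨⟨u, rfl⟩, mem_univ _⟩, rfl⟩
  · rintro ⟨⟨_, v⟩, ⟨⟨u, rfl⟩, -⟩, rfl⟩
    obtain ⟨v, rfl⟩ := QuotientAddGroup.mk_surjective v
    exact ⟨u, v, rfl⟩

/-- For irrational `t` the leaf `Γ_t` through the origin has closure the 3-dimensional
subtorus `{([0], a, [0], b, c)}`, is a proper subset of its closure, and so is neither
closed nor compact (whence no leaf is a 2-torus and the deformed coisotropic submanifold
is not integral). -/
theorem irrational_leaf_not_closed_not_compact
    (t : ℝ) (ht : Irrational t) :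
    closure (leafGroup t)
        = {x : Fin 5 → AddCircle (2 * Real.pi) | x 0 = 0 ∧ x 2 = 0} ∧
    leafGroup t ⊂ closure (leafGroup t) ∧
    ¬ IsClosed (leafGroup t) ∧
    ¬ IsCompact (leafGroup t) := by
  have : Fact (0 < 2 * Real.pi) := ⟨Real.two_pi_pos⟩
  have he := isClosedEmbedding_subtorusEmbedding (2 * Real.pi)
  have hclosure : closure (leafGroup t) = range (subtorusEmbedding (2 * Real.pi)) := by
    rw [leafGroup_eq_image, he.closure_image_eq, closure_prod_eq,
      (AddCircle.dense_range_linearFlow Real.two_pi_pos.ne' ht.neg).closure_eq, closure_univ,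
      univ_prod_univ, image_univ]
  have hproper : leafGroup t ⊂ closure (leafGroup t) := by
    rw [hclosure, ← image_univ, leafGroup_eq_image]
    refine he.injective.image_strictMono (ssubset_univ_iff.mpr fun h => ?_)
    exact AddCircle.half_period_zero_notMem_range_linearFlow ht.neg (h ▸ mem_univ (_, 0)).1
  exact ⟨hclosure.trans (range_subtorusEmbedding _), hproper,
    fun h => hproper.ne h.closure_eq.symm, fun h => hproper.ne h.isClosed.closure_eq.symm⟩
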